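/- arXiv:math/0306044 — 2 statements merged into one kernel-verified Lean document; each statement's English description precedes it below -/
import Mathlib

section
/- Every FODC (d, Ω) over R determines a faithful right Cartan pair: letting Ω* = Hom_{-R}(Ω, R) (right R-module maps) with bimodule structure (aXb)(ω) = a·X(bω), the map ρ_d: Ω* → End_k(R) given by ρ_d(X)(r) = X(dr) satisfies ρ_d(aX) = a·ρ_d(X), the twisted Leibniz rule ρ_d(X)(rs) = ρ_d(X)(r)·s + ρ_d(X·r)(s), and is injective. -/
open TensorProduct MulOpposite

/-! A right `R`-linear `X : Ω → R` that kills `d R` kills `(a ⊗ 1) • d r = d (a r) - d a · r`,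
and then, by right linearity, all of `(a ⊗ op b) • d r = ((a ⊗ 1) • d r) · b`. These elements
span `Ω` over `k` because `d R` generates `Ω` as a bimodule, so `X = 0`; faithfulness follows by
applying this to a difference. The twisted Leibniz rule is the Leibniz rule of `d` read through `X`. -/

section

variable {k R Ω : Type*} [CommSemiring k] [Ring R] [Algebra k R] [AddCommGroup Ω]
  [Module (R ⊗[k] Rᵐᵒᵖ) Ω]

def IsBimoduleDerivation [Module k Ω] (d : R →ₗ[k] Ω) : Prop :=
  ∀ a b : R, d (a * b) = (a ⊗ₜ[k] (1 : Rᵐᵒᵖ)) • d b + ((1 : R) ⊗ₜ[k] op b) • d a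

def IsRightLinear [Module k Ω] (X : Ω →ₗ[k] R) : Prop :=
  ∀ (b : R) (ω : Ω), X (((1 : R) ⊗ₜ[k] op b) • ω) = X ω * b

theorem map_smul_eq_zero_of_mem_span {M : Type*} [AddCommGroup M] (Z : Ω →+ M) {S : Set Ω}
    (hS : ∀ (a b : R), ∀ s ∈ S, Z ((a ⊗ₜ[k] op b) • s) = 0) {ω : Ω}
    (hω : ω ∈ Submodule.span (R ⊗[k] Rᵐᵒᵖ) S) (c : R ⊗[k] Rᵐᵒᵖ) : Z (c • ω) = 0 := by
  induction hω using Submodule.span_induction generalizing c with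
  | mem s hs =>
    induction c using TensorProduct.induction_on with
    -- this `0` is the additive zero of `R ⊗[k] Rᵐᵒᵖ`, only definitionally the ring's `0`
    | zero => exact (congrArg Z (zero_smul (R ⊗[k] Rᵐᵒᵖ) s)).trans (map_zero Z)
    | tmul a b => exact hS a b.unop s hs
    | add c₁ c₂ h₁ h₂ => rw [add_smul, map_add, h₁, h₂, add_zero]
  | zero => rw [smul_zero, map_zero]
  | add x y _ _ hx hy => rw [smul_add, map_add, hx, hy, add_zero]
  | smul c' x _ hx => rw [smul_smul]; exact hx _

variable [Module k Ω] {d : R →ₗ[k] Ω} {X Y : Ω →ₗ[k] R}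

theorem IsRightLinear.sub (hX : IsRightLinear X) (hY : IsRightLinear Y) :
    IsRightLinear (X - Y) := fun b ω => by
  rw [LinearMap.sub_apply, LinearMap.sub_apply, hX, hY, sub_mul]

theorem IsRightLinear.map_d_mul (hd : IsBimoduleDerivation d) (hX : IsRightLinear X) (r s : R) :
    X (d (r * s)) = X (d r) * s + X ((r ⊗ₜ[k] (1 : Rᵐᵒᵖ)) • d s) := by
  rw [hd r s, map_add, hX, add_comm]

theorem IsRightLinear.map_tmul_smul_d_eq_zero (hd : IsBimoduleDerivation d)
    (hX : IsRightLinear X) (hXd : ∀ r, X (d r) = 0) (a b r : R) :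
    X ((a ⊗ₜ[k] op b) • d r) = 0 := by
  have hleft : X ((a ⊗ₜ[k] (1 : Rᵐᵒᵖ)) • d r) = 0 := by
    rw [eq_sub_of_add_eq (hd a r).symm, map_sub, hXd, hX, hXd, zero_mul, sub_zero]
  have hsplit : (a ⊗ₜ[k] op b : R ⊗[k] Rᵐᵒᵖ) = ((1 : R) ⊗ₜ[k] op b) * (a ⊗ₜ[k] (1 : Rᵐᵒᵖ)) := by
    rw [Algebra.TensorProduct.tmul_mul_tmul, one_mul, mul_one]
  rw [hsplit, mul_smul, hX, hleft, zero_mul]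

theorem IsRightLinear.eq_zero_of_map_d (hd : IsBimoduleDerivation d)
    (hgen : Submodule.span (R ⊗[k] Rᵐᵒᵖ) (Set.range d) = ⊤)
    (hX : IsRightLinear X) (hXd : ∀ r, X (d r) = 0) : X = 0 := by
  ext ω
  have hS : ∀ (a b : R), ∀ s ∈ Set.range d, (X : Ω →+ R) ((a ⊗ₜ[k] op b) • s) = 0 := by
    rintro a b _ ⟨r, rfl⟩
    exact hX.map_tmul_smul_d_eq_zero hd hXd a b r
  simpa using map_smul_eq_zero_of_mem_span (X : Ω →+ R) hS (hgen ▸ Submodule.mem_top) 1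

theorem IsRightLinear.ext_of_map_d (hd : IsBimoduleDerivation d)
    (hgen : Submodule.span (R ⊗[k] Rᵐᵒᵖ) (Set.range d) = ⊤)
    (hX : IsRightLinear X) (hY : IsRightLinear Y) (h : ∀ r, X (d r) = Y (d r)) : X = Y :=
  sub_eq_zero.mp <| (hX.sub hY).eq_zero_of_map_d hd hgen fun r => sub_eq_zero.mpr (h r)

end

theorem fodc_gives_faithful_cartan_pair_general (k R Ω : Type*) [Field k] [Ring R] [Algebra k R]
    [AddCommGroup Ω] [Module k Ω] [Module (R ⊗[k] Rᵐᵒᵖ) Ω]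
    (d : R →ₗ[k] Ω)
    (hd : ∀ a b : R, d (a * b) =
      (a ⊗ₜ[k] (1 : Rᵐᵒᵖ)) • d b + ((1 : R) ⊗ₜ[k] op b) • d a)
    (hgen : Submodule.span (R ⊗[k] Rᵐᵒᵖ) (Set.range d) = ⊤) :
    -- `ρ_d` is a left `R`-module map: `ρ_d(a·X)(r) = a·ρ_d(X)(r)`
    (∀ (X : Ω →ₗ[k] R) (a r : R),
      ((LinearMap.mul k R a) ∘ₗ X) (d r) = a * X (d r)) ∧
    -- twisted Leibniz rule: `ρ_d(X)(rs) = ρ_d(X)(r)·s + ρ_d(X·r)(s)`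
    (∀ X : Ω →ₗ[k] R, (∀ (b : R) (ω : Ω), X (((1 : R) ⊗ₜ[k] op b) • ω) = X ω * b) →
      ∀ r s : R, X (d (r * s)) = X (d r) * s + X ((r ⊗ₜ[k] (1 : Rᵐᵒᵖ)) • d s)) ∧
    -- faithfulness: `ρ_d` is injective on right `R`-module maps
    (∀ X Y : Ω →ₗ[k] R,
      (∀ (b : R) (ω : Ω), X (((1 : R) ⊗ₜ[k] op b) • ω) = X ω * b) →
      (∀ (b : R) (ω : Ω), Y (((1 : R) ⊗ₜ[k] op b) • ω) = Y ω * b) →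
      (∀ r : R, X (d r) = Y (d r)) → X = Y) :=
  ⟨fun _ _ _ => rfl, fun _ hX => IsRightLinear.map_d_mul hd hX,
    fun _ _ hX hY => IsRightLinear.ext_of_map_d hd hgen hX hY⟩

/-- Every FODC `(d, Ω)` over `R` determines a faithful right Cartan pair: on
`Ω* = Hom_{-R}(Ω, R)` (right `R`-module maps, i.e. `k`-linear maps `X` with
`X(ω·b) = X(ω)·b`), the map `ρ_d(X)(r) = X(d r)` satisfies `ρ_d(a·X) = a·ρ_d(X)`,
the twisted Leibniz rule `ρ_d(X)(rs) = ρ_d(X)(r)·s + ρ_d(X·r)(s)` (where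
`(X·r)(ω) = X(r·ω)`), and is injective on right `R`-linear maps. -/
theorem fodc_gives_faithful_cartan_pair (k R Ω : Type*) [Field k] [Ring R] [Algebra k R]
    [AddCommGroup Ω] [Module k Ω] [Module (R ⊗[k] Rᵐᵒᵖ) Ω]
    [IsScalarTower k (R ⊗[k] Rᵐᵒᵖ) Ω]
    (d : R →ₗ[k] Ω)
    (hd : ∀ a b : R, d (a * b) =
      (a ⊗ₜ[k] (1 : Rᵐᵒᵖ)) • d b + ((1 : R) ⊗ₜ[k] op b) • d a)
    (hgen : Submodule.span (R ⊗[k] Rᵐᵒᵖ) (Set.range d) = ⊤) :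
    -- `ρ_d` is a left `R`-module map: `ρ_d(a·X)(r) = a·ρ_d(X)(r)`
    (∀ (X : Ω →ₗ[k] R) (a r : R),
      ((LinearMap.mul k R a) ∘ₗ X) (d r) = a * X (d r)) ∧
    -- twisted Leibniz rule: `ρ_d(X)(rs) = ρ_d(X)(r)·s + ρ_d(X·r)(s)`
    (∀ X : Ω →ₗ[k] R, (∀ (b : R) (ω : Ω), X (((1 : R) ⊗ₜ[k] op b) • ω) = X ω * b) →
      ∀ r s : R, X (d (r * s)) = X (d r) * s + X ((r ⊗ₜ[k] (1 : Rᵐᵒᵖ)) • d s)) ∧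
    -- faithfulness: `ρ_d` is injective on right `R`-module maps
    (∀ X Y : Ω →ₗ[k] R,
      (∀ (b : R) (ω : Ω), X (((1 : R) ⊗ₜ[k] op b) • ω) = X ω * b) →
      (∀ (b : R) (ω : Ω), Y (((1 : R) ⊗ₜ[k] op b) • ω) = Y ω * b) →
      (∀ r : R, X (d r) = Y (d r)) → X = Y) :=
  fodc_gives_faithful_cartan_pair_general k R Ω d hd hgen
end

section
/- Let H be a Hopf algebra such that the algebra homomorphisms Alg(H,k) separate points of H. For D ∈ End_k(H), the condition D = (id⊗ε)∘(id⊗D)∘Δ holds if and only if D∘L = L∘D for every translation L = (φ⊗id)∘Δ with φ ∈ Alg(H,k). -/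
/-!
For a linear functional `f` on a coalgebra write `R_f a = a₁ f(a₂)` and `L_f a = f(a₁) a₂`.
The condition on `D` says `D = R_{ε∘D}`, and by coassociativity every `R_f` commutes with every
`L_g` (both sides are `g(a₁) a₂ f(a₃)`). Conversely, if `D` commutes with `L_φ`, then
`φ ∘ D = ε ∘ L_φ ∘ D = (ε∘D) ∘ L_φ = φ ∘ R_{ε∘D}`, the last step because both sides are the
convolution `φ * (ε∘D)`; since the `φ ∈ Alg(H,k)` separate points, `D = R_{ε∘D}`.
-/

open TensorProduct

namespace Coalgebra

variable {R C : Type*} [CommSemiring R] [AddCommMonoid C] [Module R C] [Coalgebra R C]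

noncomputable def leftTranslation (g : C →ₗ[R] R) : C →ₗ[R] C :=
  (_root_.TensorProduct.lid R C).toLinearMap ∘ₗ g.rTensor C ∘ₗ comul

noncomputable def rightTranslation (f : C →ₗ[R] R) : C →ₗ[R] C :=
  (_root_.TensorProduct.rid R C).toLinearMap ∘ₗ f.lTensor C ∘ₗ comul

theorem Repr.leftTranslation_apply {ι : Type*} {a : C} (𝓡 : Repr R a ι) (g : C →ₗ[R] R) :
    leftTranslation g a = ∑ i ∈ 𝓡.index, g (𝓡.left i) • 𝓡.right i := by
  simp [leftTranslation, ← 𝓡.eq]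

theorem Repr.rightTranslation_apply {ι : Type*} {a : C} (𝓡 : Repr R a ι) (f : C →ₗ[R] R) :
    rightTranslation f a = ∑ i ∈ 𝓡.index, f (𝓡.right i) • 𝓡.left i := by
  simp [rightTranslation, ← 𝓡.eq]

theorem leftTranslation_comp_rightTranslation (g f : C →ₗ[R] R) :
    leftTranslation g ∘ₗ rightTranslation f = rightTranslation f ∘ₗ leftTranslation g := by
  ext a
  let 𝓡 := Repr.arbitrary R a
  let 𝓡₁ i := Repr.arbitrary R (𝓡.left i)
  let 𝓡₂ i := Repr.arbitrary R (𝓡.right i)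
  -- `Φ (x ⊗ y ⊗ z) = g x • f z • y`, applied to coassociativity
  let Φ : C ⊗[R] (C ⊗[R] C) →ₗ[R] C :=
    (_root_.TensorProduct.lid R C).toLinearMap ∘ₗ
      map g ((_root_.TensorProduct.rid R C).toLinearMap ∘ₗ f.lTensor C)
  simpa [𝓡.leftTranslation_apply, 𝓡.rightTranslation_apply, (𝓡₁ _).leftTranslation_apply,
    (𝓡₂ _).rightTranslation_apply, Finset.smul_sum, Φ, smul_comm (g _)]
    using congr(Φ $(sum_tmul_tmul_eq 𝓡 𝓡₁ 𝓡₂))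

theorem rightTranslation_counit : rightTranslation (counit : C →ₗ[R] R) = LinearMap.id := by
  rw [rightTranslation, lTensor_counit_comp_comul]
  ext
  simp

theorem comp_rightTranslation (g f : C →ₗ[R] R) :
    g ∘ₗ rightTranslation f = f ∘ₗ leftTranslation g := by
  ext a
  let 𝓡 := Repr.arbitrary R a
  simp [𝓡.leftTranslation_apply, 𝓡.rightTranslation_apply, mul_comm]

theorem counit_comp_leftTranslation (g : C →ₗ[R] R) : counit ∘ₗ leftTranslation g = g := by
  rw [← comp_rightTranslation, rightTranslation_counit, LinearMap.comp_id]

theorem comp_rightTranslation_counit_comp {g : C →ₗ[R] R} {D : C →ₗ[R] C}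
    (hD : D ∘ₗ leftTranslation g = leftTranslation g ∘ₗ D) :
    g ∘ₗ rightTranslation (counit ∘ₗ D) = g ∘ₗ D :=
  calc g ∘ₗ rightTranslation (counit ∘ₗ D)
      _ = counit ∘ₗ D ∘ₗ leftTranslation g := comp_rightTranslation _ _
      _ = (counit ∘ₗ leftTranslation g) ∘ₗ D := by rw [hD]; rfl
      _ = g ∘ₗ D := by rw [counit_comp_leftTranslation]

end Coalgebra

/-- If the algebra maps `H → k` separate the points of the Hopf algebra `H`, then for
`D ∈ End_k(H)` the condition `D = (id⊗ε)∘(id⊗D)∘Δ` holds iff `D` commutes with every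
translation `L_φ = (φ⊗id)∘Δ`, `φ ∈ Alg(H,k)`. -/
theorem invariance_iff_commutes_with_translations (k H : Type*) [Field k] [Ring H]
    [HopfAlgebra k H]
    (hsep : ∀ a b : H, a ≠ b → ∃ φ : H →ₐ[k] k, φ a ≠ φ b)
    (D : H →ₗ[k] H) :
    ((TensorProduct.rid k H).toLinearMap ∘ₗ
        (LinearMap.lTensor H (Coalgebra.counit ∘ₗ D)) ∘ₗ Coalgebra.comul = D) ↔
    (∀ φ : H →ₐ[k] k,
      D ∘ₗ ((TensorProduct.lid k H).toLinearMap ∘ₗ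
          (LinearMap.rTensor H φ.toLinearMap) ∘ₗ Coalgebra.comul) =
        ((TensorProduct.lid k H).toLinearMap ∘ₗ
          (LinearMap.rTensor H φ.toLinearMap) ∘ₗ Coalgebra.comul) ∘ₗ D) := by
  change Coalgebra.rightTranslation (Coalgebra.counit ∘ₗ D) = D ↔
    ∀ φ : H →ₐ[k] k, D ∘ₗ Coalgebra.leftTranslation φ.toLinearMap =
      Coalgebra.leftTranslation φ.toLinearMap ∘ₗ D
  constructor
  · rintro hD φ
    rw [← hD]
    exact (Coalgebra.leftTranslation_comp_rightTranslation _ _).symm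
  · intro hcomm
    ext a
    by_contra hne
    obtain ⟨φ, hφ⟩ := hsep _ _ hne
    exact hφ (LinearMap.congr_fun (Coalgebra.comp_rightTranslation_counit_comp (hcomm φ)) a)
end
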